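/- For r ≥ 3, if G is a K_{1,r}-free graph and B is a set of vertices inducing a bipartite subgraph of G, then |B| ≤ 2(r-1)·γ(G). -/

import Mathlib

/-!
Take a minimum dominating set `D`. Every vertex of `B` lies in the closed neighbourhood of some
`d ∈ D`, so it suffices to bound the part of `B` in each closed neighbourhood by `2(r-1)`. The
neighbours of `d` inside one colour class are pairwise nonadjacent, so `K_{1,r}`-freeness allows at
most `r - 1` of them per class; if `d` itself lies in `B`, it has no neighbour in its own class, and
`1 + (r - 1) ≤ 2(r - 1)` as soon as `r ≥ 2`.
-/

open Finset

variable {V : Type*}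

/-- A finset is independent in `G` : no two of its vertices are adjacent. -/
def IsIndepFinset (G : SimpleGraph V) (S : Finset V) : Prop :=
  ∀ u ∈ S, ∀ v ∈ S, ¬ G.Adj u v

/-- A finset dominates `G` : every vertex outside it has a neighbour inside it. -/
def IsDomFinset (G : SimpleGraph V) (D : Finset V) : Prop :=
  ∀ v, v ∉ D → ∃ u ∈ D, G.Adj u v

/-- The independence number of `G`. -/
noncomputable def indepNum [Fintype V] (G : SimpleGraph V) : ℕ :=
  sSup {n | ∃ S : Finset V, IsIndepFinset G S ∧ S.card = n}

/-- The domination number of `G`. -/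
noncomputable def domNum [Fintype V] (G : SimpleGraph V) : ℕ :=
  sInf {n | ∃ D : Finset V, IsDomFinset G D ∧ D.card = n}

/-- `G` is `K_{1,r}`-free: no vertex has `r` pairwise nonadjacent neighbours. -/
def K1rFree (G : SimpleGraph V) (r : ℕ) : Prop :=
  ¬ ∃ (v : V) (A : Finset V), (∀ a ∈ A, G.Adj v a) ∧
      (∀ a ∈ A, ∀ b ∈ A, a ≠ b → ¬ G.Adj a b) ∧ A.card = r

theorem IsIndepFinset.mono {G : SimpleGraph V} {S T : Finset V} (hT : IsIndepFinset G T)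
    (hST : S ⊆ T) : IsIndepFinset G S :=
  fun u hu v hv => hT u (hST hu) v (hST hv)

theorem K1rFree.card_le_of_forall_adj {G : SimpleGraph V} {r : ℕ} (hG : K1rFree G r) {d : V}
    {S : Finset V} (hS : IsIndepFinset G S) (hadj : ∀ a ∈ S, G.Adj d a) : S.card ≤ r - 1 := by
  by_contra! h
  obtain ⟨T, hTS, hTcard⟩ := exists_subset_card_eq (show r ≤ S.card by omega)
  exact hG ⟨d, T, fun a ha => hadj a (hTS ha),
    fun a ha b hb _ => hS a (hTS ha) b (hTS hb), hTcard⟩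

theorem K1rFree.ne_zero {G : SimpleGraph V} {r : ℕ} (hG : K1rFree G r) (v : V) : r ≠ 0 := by
  rintro rfl
  exact hG ⟨v, ∅, by simp, by simp, rfl⟩

theorem exists_isDomFinset_card_eq_domNum [Fintype V] (G : SimpleGraph V) :
    ∃ D : Finset V, IsDomFinset G D ∧ D.card = domNum G :=
  Nat.sInf_mem (s := {n | ∃ D : Finset V, IsDomFinset G D ∧ D.card = n})
    ⟨univ.card, univ, fun v hv => absurd (mem_univ v) hv, rfl⟩

theorem card_le_mul_domNum [Fintype V] (G : SimpleGraph V) (B : Finset V) (k : ℕ)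
    (hk : ∀ d, ∀ S ⊆ B, (∀ b ∈ S, b = d ∨ G.Adj d b) → S.card ≤ k) :
    B.card ≤ k * domNum G := by
  classical
  obtain ⟨D, hD, hDcard⟩ := exists_isDomFinset_card_eq_domNum G
  let closedNbhdIn : V → Finset V := fun d => B.filter (fun b => b = d ∨ G.Adj d b)
  have hcover : B ⊆ D.biUnion closedNbhdIn := by
    intro b hb
    rw [mem_biUnion]
    by_cases hbD : b ∈ D
    · exact ⟨b, hbD, mem_filter.mpr ⟨hb, Or.inl rfl⟩⟩
    · obtain ⟨d, hd, hadj⟩ := hD b hbD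
      exact ⟨d, hd, mem_filter.mpr ⟨hb, Or.inr hadj⟩⟩
  calc B.card ≤ (D.biUnion closedNbhdIn).card := card_le_card hcover
    _ ≤ D.card * k := card_biUnion_le_card_mul _ _ _ fun d _ =>
        hk d _ (filter_subset _ _) fun _ hb => (mem_filter.mp hb).2
    _ = k * domNum G := by rw [hDcard, mul_comm]

section Bipartite

variable [DecidableEq V] {G : SimpleGraph V} {r : ℕ} {B₁ B₂ S : Finset V} {d : V}

theorem K1rFree.card_le_of_mem_left (hG : K1rFree G r) (h1 : IsIndepFinset G B₁)
    (h2 : IsIndepFinset G B₂) (hd : d ∈ B₁) (hS : S ⊆ B₁ ∪ B₂)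
    (hnbhd : ∀ b ∈ S, b = d ∨ G.Adj d b) : S.card ≤ r := by
  have hadj : ∀ b ∈ S.erase d, G.Adj d b := fun b hb =>
    (hnbhd b (mem_of_mem_erase hb)).resolve_left (ne_of_mem_erase hb)
  have hsub : S.erase d ⊆ B₂ := fun b hb => by
    rcases mem_union.mp (hS (mem_of_mem_erase hb)) with hb₁ | hb₂
    · exact absurd (hadj b hb) (h1 d hd b hb₁)
    · exact hb₂
  have := hG.card_le_of_forall_adj (h2.mono hsub) hadj
  have := pred_card_le_card_erase (s := S) (a := d)
  have := hG.ne_zero d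
  omega

theorem K1rFree.card_le_of_notMem (hG : K1rFree G r) (h1 : IsIndepFinset G B₁)
    (h2 : IsIndepFinset G B₂) (hd : d ∉ B₁ ∪ B₂) (hS : S ⊆ B₁ ∪ B₂)
    (hnbhd : ∀ b ∈ S, b = d ∨ G.Adj d b) : S.card ≤ 2 * (r - 1) := by
  have hadj : ∀ b ∈ S, G.Adj d b := fun b hb =>
    (hnbhd b hb).resolve_left fun h => hd (h ▸ hS hb)
  have hin : S.filter (· ∈ B₁) ⊆ B₁ := fun b hb => (mem_filter.mp hb).2
  have hout : S.filter (· ∉ B₁) ⊆ B₂ := fun b hb => by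
    obtain ⟨hbS, hb₁⟩ := mem_filter.mp hb
    exact (mem_union.mp (hS hbS)).resolve_left hb₁
  have h₁ := hG.card_le_of_forall_adj (h1.mono hin) fun b hb => hadj b (mem_filter.mp hb).1
  have h₂ := hG.card_le_of_forall_adj (h2.mono hout) fun b hb => hadj b (mem_filter.mp hb).1
  rw [← card_filter_add_card_filter_not (· ∈ B₁)]
  omega

theorem K1rFree.card_le_of_subset_bipartite (hG : K1rFree G r) (hr : 2 ≤ r)
    (h1 : IsIndepFinset G B₁) (h2 : IsIndepFinset G B₂) (hS : S ⊆ B₁ ∪ B₂)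
    (hnbhd : ∀ b ∈ S, b = d ∨ G.Adj d b) : S.card ≤ 2 * (r - 1) := by
  by_cases hd₁ : d ∈ B₁
  · have := hG.card_le_of_mem_left h1 h2 hd₁ hS hnbhd
    omega
  by_cases hd₂ : d ∈ B₂
  · have := hG.card_le_of_mem_left h2 h1 hd₂ (union_comm B₁ B₂ ▸ hS) hnbhd
    omega
  exact hG.card_le_of_notMem h1 h2 (by simp [hd₁, hd₂]) hS hnbhd

end Bipartite

theorem stmt3_general [Fintype V] [DecidableEq V] (G : SimpleGraph V) (r : ℕ) (hr : 3 ≤ r)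
    (hG : K1rFree G r) (B B₁ B₂ : Finset V)
    (hpart : B₁ ∪ B₂ = B)
    (h1 : IsIndepFinset G B₁) (h2 : IsIndepFinset G B₂) :
    B.card ≤ 2 * (r - 1) * domNum G :=
  card_le_mul_domNum G B _ fun _ _ hS hnbhd =>
    hG.card_le_of_subset_bipartite (by omega) h1 h2 (hpart ▸ hS) hnbhd

/-- For r ≥ 3, in a K_{1,r}-free graph any vertex set inducing a bipartite
subgraph has size at most 2(r-1)·γ(G). -/
theorem stmt3 [Fintype V] [DecidableEq V] (G : SimpleGraph V) (r : ℕ) (hr : 3 ≤ r)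
    (hG : K1rFree G r) (B B₁ B₂ : Finset V)
    (hpart : B₁ ∪ B₂ = B) (hdisj : Disjoint B₁ B₂)
    (h1 : IsIndepFinset G B₁) (h2 : IsIndepFinset G B₂) :
    B.card ≤ 2 * (r - 1) * domNum G :=
  stmt3_general G r hr hG B B₁ B₂ hpart h1 h2
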